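/- If a primitive event (X,w) = x is part of a cause of an event α in a recursive causal Kripke setting (K,t) at a world w' according to the MODIFIED HP definition of actual causality, then (X,w) = x is part of a cause of α in (K,t) at w' according to the UPDATED HP definition. -/

import Mathlib

open Classical

noncomputable section

/-- A causal Kripke model `K = (S, W, Rel, F)`: the signature `S` consists of the disjoint
finite sets `Exo` of exogenous and `Endo` of endogenous variables together with a finite
nonempty range `range Γ w` of possible values for each variable `Γ` at each world `w`;
`World` is a finite set of possible worlds, `Rel` is the accessibility relation, and `eqs`
assigns to each endogenous variable `X` and world `w` a structural equation computing the
value of `(X,w)` from the values of all the other variables (it does not depend on the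
coordinate `(X,w)` itself, and its value lies in the range of `(X,w)`). -/
structure CKM where
  Exo : Type
  Endo : Type
  World : Type
  Val : Type
  exoFin : Fintype Exo
  endoFin : Fintype Endo
  worldFin : Fintype World
  Rel : World → World → Prop
  range : (Exo ⊕ Endo) → World → Finset Val
  range_nonempty : ∀ Γ w, (range Γ w).Nonempty
  eqs : Endo → World → (((Exo ⊕ Endo) × World) → Val) → Val
  eqs_mem : ∀ X w g, eqs X w g ∈ range (Sum.inr X) w
  eqs_indep : ∀ X w g g',
    (∀ p, p ≠ (Sum.inr X, w) → g p = g' p) → eqs X w g = eqs X w g'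

namespace CKM

/-- A context assigns to every exogenous variable at every world a value in its range. -/
def ValidContext (K : CKM) (t : K.Exo → K.World → K.Val) : Prop :=
  ∀ U w, t U w ∈ K.range (Sum.inl U) w

/-- `v` is a solution of the causal Kripke setting `(K, t)`: it agrees with the context `t`
on all exogenous variables and satisfies all structural equations. -/
def Solves (K : CKM) (t : K.Exo → K.World → K.Val)
    (v : ((K.Exo ⊕ K.Endo) × K.World) → K.Val) : Prop :=
  (∀ U w, v (Sum.inl U, w) = t U w) ∧ ∀ X w, v (Sum.inr X, w) = K.eqs X w v

/-- The variable `p` influences the (endogenous) variable `q` (i.e. `q` directly causally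
depends on `p`): some change in the value of `p`, keeping all other variables fixed
(within their ranges), changes the value of the structural equation of `q`. -/
def Influences (K : CKM) (p q : (K.Exo ⊕ K.Endo) × K.World) : Prop :=
  ∃ X w, q = (Sum.inr X, w) ∧
    ∃ g g', (∀ r, g r ∈ K.range r.1 r.2) ∧ (∀ r, g' r ∈ K.range r.1 r.2) ∧
      (∀ r, r ≠ p → g r = g' r) ∧ K.eqs X w g ≠ K.eqs X w g'

/-- A causal Kripke model is recursive if it contains no cyclic dependencies. -/
def Recursive (K : CKM) : Prop :=
  ∀ p, ¬ Relation.TransGen K.Influences p p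

/-- The causal Kripke model obtained from `K` by the intervention setting the variables in
`dom` to the values prescribed by `val`. -/
def doInt (K : CKM) (dom : Finset (K.Endo × K.World)) (val : K.Endo × K.World → K.Val) :
    CKM :=
  { K with
    eqs := fun X w g =>
      if (X, w) ∈ dom ∧ val (X, w) ∈ K.range (Sum.inr X) w then val (X, w)
      else K.eqs X w g
    eqs_mem := by
      intro X w g
      by_cases h : (X, w) ∈ dom ∧ val (X, w) ∈ K.range (Sum.inr X) w
      · simp only [if_pos h]; exact h.2
      · simp only [if_neg h]; exact K.eqs_mem X w g
    eqs_indep := by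
      intro X w g g' hgg'
      by_cases h : (X, w) ∈ dom ∧ val (X, w) ∈ K.range (Sum.inr X) w
      · simp only [if_pos h]
      · simp only [if_neg h]; exact K.eqs_indep X w g g' hgg' }

end CKM

/-- Events (modal-Boolean combinations of primitive events): primitive events `X = x` and
`(X,w) = x`, negation, conjunction and the modal operator `□`. -/
inductive Event (E W V : Type) : Type
  | eq : E → V → Event E W V
  | eqAt : E → W → V → Event E W V
  | neg : Event E W V → Event E W V
  | conj : Event E W V → Event E W V → Event E W V
  | box : Event E W V → Event E W V

namespace CKM

/-- Satisfaction of an event at a world of `K`, relative to a solution `v` of the setting. -/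
def SatE (K : CKM) (v : ((K.Exo ⊕ K.Endo) × K.World) → K.Val) :
    K.World → Event K.Endo K.World K.Val → Prop
  | w, .eq X x => v (Sum.inr X, w) = x
  | _, .eqAt X w' x => v (Sum.inr X, w') = x
  | w, .neg α => ¬ SatE K v w α
  | w, .conj α β => SatE K v w α ∧ SatE K v w β
  | w, .box α => ∀ w', K.Rel w w' → SatE K v w' α

/-- `(K,t,w) ⊩ [dom ← val] α` : the event `α` holds at `w` in the model obtained from the
intervention `dom ← val`, in the context `t`. -/
def SatI (K : CKM) (t : K.Exo → K.World → K.Val) (dom : Finset (K.Endo × K.World))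
    (val : K.Endo × K.World → K.Val) (w : K.World) (α : Event K.Endo K.World K.Val) :
    Prop :=
  ∀ v, (K.doInt dom val).Solves t v → (K.doInt dom val).SatE v w α

/-- AC1 : `α` actually holds at `w`, and each conjunct `(X_i, w_j) = y_ij` of `Y = y`
actually holds. -/
def AC1 (K : CKM) (t : K.Exo → K.World → K.Val) (w : K.World)
    (Y : Finset (K.Endo × K.World)) (y : K.Endo × K.World → K.Val)
    (α : Event K.Endo K.World K.Val) : Prop :=
  ∀ v, K.Solves t v → K.SatE v w α ∧ ∀ p ∈ Y, v (Sum.inr p.1, p.2) = y p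

/-- AC2a together with AC2bᵒ (they share the partition `Z`, `N` and the setting `n`):
there is a partition of the endogenous variables into `Z ⊇ Y` and `N` and settings `y'`
of `Y` and `n` of `N` such that `(K,t,w) ⊩ [Y ← y', N ← n] ¬α`, and, where `z*` are the
actual values of the variables of `Z`, for every subset `Z'` of `Z \ Y`,
`(K,t,w) ⊩ [Y ← y, N ← n, Z' ← z'*] α`. -/
def AC2o (K : CKM) (t : K.Exo → K.World → K.Val) (w : K.World)
    (Y : Finset (K.Endo × K.World)) (y : K.Endo × K.World → K.Val)
    (α : Event K.Endo K.World K.Val) : Prop :=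
  ∃ Z N : Finset (K.Endo × K.World), ∃ y' n : K.Endo × K.World → K.Val,
    Y ⊆ Z ∧ Disjoint Z N ∧ (∀ p : K.Endo × K.World, p ∈ Z ∨ p ∈ N) ∧
    (∀ p ∈ Y, y' p ∈ K.range (Sum.inr p.1) p.2) ∧
    (∀ p ∈ N, n p ∈ K.range (Sum.inr p.1) p.2) ∧
    K.SatI t (Y ∪ N) (fun p => if p ∈ Y then y' p else n p) w (.neg α) ∧
    ∀ v, K.Solves t v → ∀ Z' ⊆ Z \ Y,
      K.SatI t (Y ∪ N ∪ Z')
        (fun p => if p ∈ Y then y p else if p ∈ N then n p else v (Sum.inr p.1, p.2)) w α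

/-- AC2a together with AC2bᵘ (updated definition): as in `AC2o`, but moreover the
restoration of the actual values `z'*` must keep `α` true for every subset `N'` of `N`. -/
def AC2u (K : CKM) (t : K.Exo → K.World → K.Val) (w : K.World)
    (Y : Finset (K.Endo × K.World)) (y : K.Endo × K.World → K.Val)
    (α : Event K.Endo K.World K.Val) : Prop :=
  ∃ Z N : Finset (K.Endo × K.World), ∃ y' n : K.Endo × K.World → K.Val,
    Y ⊆ Z ∧ Disjoint Z N ∧ (∀ p : K.Endo × K.World, p ∈ Z ∨ p ∈ N) ∧
    (∀ p ∈ Y, y' p ∈ K.range (Sum.inr p.1) p.2) ∧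
    (∀ p ∈ N, n p ∈ K.range (Sum.inr p.1) p.2) ∧
    K.SatI t (Y ∪ N) (fun p => if p ∈ Y then y' p else n p) w (.neg α) ∧
    ∀ v, K.Solves t v → ∀ Z' ⊆ Z \ Y, ∀ N' ⊆ N,
      K.SatI t (Y ∪ N' ∪ Z')
        (fun p => if p ∈ Y then y p else if p ∈ N' then n p else v (Sum.inr p.1, p.2)) w α

/-- AC2aᵐ (modified definition): there are a set `N` of endogenous variables and a setting
`y'` of the variables in `Y` such that, where `n*` are the actual values of the variables
in `N`, `(K,t,w) ⊩ [Y ← y', N ← n*] ¬α`. -/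
def AC2m (K : CKM) (t : K.Exo → K.World → K.Val) (w : K.World)
    (Y : Finset (K.Endo × K.World)) (y : K.Endo × K.World → K.Val)
    (α : Event K.Endo K.World K.Val) : Prop :=
  ∃ N : Finset (K.Endo × K.World), ∃ y' : K.Endo × K.World → K.Val,
    (∀ p ∈ Y, y' p ∈ K.range (Sum.inr p.1) p.2) ∧
    ∀ v, K.Solves t v →
      K.SatI t (Y ∪ N)
        (fun p => if p ∈ Y then y' p else v (Sum.inr p.1, p.2)) w (.neg α)

/-- `Y = y` is an actual cause of `α` in `(K,t)` at `w` by the ORIGINAL HP definition. -/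
def IsCauseO (K : CKM) (t : K.Exo → K.World → K.Val) (w : K.World)
    (Y : Finset (K.Endo × K.World)) (y : K.Endo × K.World → K.Val)
    (α : Event K.Endo K.World K.Val) : Prop :=
  K.AC1 t w Y y α ∧ K.AC2o t w Y y α ∧
    ∀ Y' ⊂ Y, ∀ y'' : K.Endo × K.World → K.Val,
      ¬ (K.AC1 t w Y' y'' α ∧ K.AC2o t w Y' y'' α)

/-- `Y = y` is an actual cause of `α` in `(K,t)` at `w` by the UPDATED HP definition. -/
def IsCauseU (K : CKM) (t : K.Exo → K.World → K.Val) (w : K.World)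
    (Y : Finset (K.Endo × K.World)) (y : K.Endo × K.World → K.Val)
    (α : Event K.Endo K.World K.Val) : Prop :=
  K.AC1 t w Y y α ∧ K.AC2u t w Y y α ∧
    ∀ Y' ⊂ Y, ∀ y'' : K.Endo × K.World → K.Val,
      ¬ (K.AC1 t w Y' y'' α ∧ K.AC2u t w Y' y'' α)

/-- `Y = y` is an actual cause of `α` in `(K,t)` at `w` by the MODIFIED HP definition. -/
def IsCauseM (K : CKM) (t : K.Exo → K.World → K.Val) (w : K.World)
    (Y : Finset (K.Endo × K.World)) (y : K.Endo × K.World → K.Val)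
    (α : Event K.Endo K.World K.Val) : Prop :=
  K.AC1 t w Y y α ∧ K.AC2m t w Y y α ∧
    ∀ Y' ⊂ Y, ∀ y'' : K.Endo × K.World → K.Val,
      ¬ (K.AC1 t w Y' y'' α ∧ K.AC2m t w Y' y'' α)

/-- `(X,w) = x` is part of a cause of `α` in `(K,t)` at `w'` by the original HP
definition: it is a conjunct of some actual cause `Y = y` of `α` at `w'`. -/
def PartOfCauseO (K : CKM) (t : K.Exo → K.World → K.Val) (w' : K.World)
    (X : K.Endo) (w : K.World) (x : K.Val) (α : Event K.Endo K.World K.Val) : Prop :=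
  ∃ Y y, K.IsCauseO t w' Y y α ∧ (X, w) ∈ Y ∧ y (X, w) = x

/-- `(X,w) = x` is part of a cause of `α` in `(K,t)` at `w'` by the updated HP
definition. -/
def PartOfCauseU (K : CKM) (t : K.Exo → K.World → K.Val) (w' : K.World)
    (X : K.Endo) (w : K.World) (x : K.Val) (α : Event K.Endo K.World K.Val) : Prop :=
  ∃ Y y, K.IsCauseU t w' Y y α ∧ (X, w) ∈ Y ∧ y (X, w) = x

/-- `(X,w) = x` is part of a cause of `α` in `(K,t)` at `w'` by the modified HP
definition. -/
def PartOfCauseM (K : CKM) (t : K.Exo → K.World → K.Val) (w' : K.World)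
    (X : K.Endo) (w : K.World) (x : K.Val) (α : Event K.Endo K.World K.Val) : Prop :=
  ∃ Y y, K.IsCauseM t w' Y y α ∧ (X, w) ∈ Y ∧ y (X, w) = x

end CKM

/-! In a recursive setting every intervention has exactly one solution, so `[Y ← y] ¬α` is the
negation of `[Y ← y] α`. Let `Y = y` be a modified cause, with witnesses `N` and `y'` for
AC2aᵐ, and let `p ∈ Y`. Then `{p} = y` is an updated cause, with `N₀ = (Y ∪ N) \ {p}` set to
`y'` on `Y` and to the actual values elsewhere: AC2a is AC2aᵐ for `Y`. If some
`[p ← y_p, N' ← n₀, Z' ← z*]` falsified `α`, this intervention would set `N' ∩ Y` to `y'` and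
every other variable it touches to its actual value (`y_p` is actual by AC1), so the proper
subset `N' ∩ Y` of `Y` would satisfy AC1 and AC2aᵐ, against minimality. Finally `{p}` is minimal
because the empty set never satisfies AC2ᵘ: for `N' = N` its two clauses contradict each other. -/

namespace CKM

variable {K : CKM} {t : K.Exo → K.World → K.Val}

section Solutions

theorem eqs_update_of_not_influences {X : K.Endo} {w : K.World}
    {g : (K.Exo ⊕ K.Endo) × K.World → K.Val} (hg : ∀ r, g r ∈ K.range r.1 r.2)
    {r : (K.Exo ⊕ K.Endo) × K.World} {a : K.Val} (ha : a ∈ K.range r.1 r.2)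
    (hr : ¬ K.Influences r (Sum.inr X, w)) :
    K.eqs X w (Function.update g r a) = K.eqs X w g := by
  by_contra hne
  refine hr ⟨X, w, rfl, _, g, fun q => ?_, hg, fun q hq => Function.update_of_ne hq _ _, hne⟩
  rcases eq_or_ne q r with rfl | hq
  · simpa using ha
  · simpa [Function.update_of_ne hq] using hg q

theorem eqs_eq_of_eqOn_influences {X : K.Endo} {w : K.World}
    {g g' : (K.Exo ⊕ K.Endo) × K.World → K.Val}
    (hg : ∀ r, g r ∈ K.range r.1 r.2) (hg' : ∀ r, g' r ∈ K.range r.1 r.2)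
    (h : ∀ q, K.Influences q (Sum.inr X, w) → g q = g' q) :
    K.eqs X w g = K.eqs X w g' := by
  have := K.exoFin; have := K.endoFin; have := K.worldFin
  suffices key : ∀ (s : Finset ((K.Exo ⊕ K.Endo) × K.World)) g,
      (∀ r, g r ∈ K.range r.1 r.2) → (∀ r ∉ s, g r = g' r) →
      (∀ r ∈ s, ¬ K.Influences r (Sum.inr X, w)) → K.eqs X w g = K.eqs X w g' by
    refine key {r | g r ≠ g' r} g hg (by simp) fun r hr hinf => ?_
    exact (Finset.mem_filter.1 hr).2 (h r hinf)
  intro s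
  induction s using Finset.induction_on with
  | empty => exact fun g _ hs _ => congrArg _ (funext fun r => hs r (Finset.notMem_empty r))
  | insert a s _ ih =>
    intro g hg hs hinf
    rw [← eqs_update_of_not_influences hg (hg' a) (hinf a (Finset.mem_insert_self a s))]
    refine ih _ (fun q => ?_) (fun q hq => ?_) fun q hq => hinf q (Finset.mem_insert_of_mem hq)
    · rcases eq_or_ne q a with rfl | hqa
      · simpa using hg' q
      · simpa [Function.update_of_ne hqa] using hg q
    · rcases eq_or_ne q a with rfl | hqa
      · simp
      · simpa [Function.update_of_ne hqa] using hs q (by simp [hqa, hq])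

theorem Recursive.wellFounded (hK : K.Recursive) :
    WellFounded (Relation.TransGen K.Influences) := by
  have := K.exoFin; have := K.endoFin; have := K.worldFin
  have : Std.Irrefl (Relation.TransGen K.Influences) := ⟨hK⟩
  exact Finite.wellFounded_of_trans_of_irrefl _

theorem Solves.mem_range (ht : K.ValidContext t) {v : (K.Exo ⊕ K.Endo) × K.World → K.Val}
    (hv : K.Solves t v) : ∀ r, v r ∈ K.range r.1 r.2
  | (.inl U, w) => hv.1 U w ▸ ht U w
  | (.inr X, w) => hv.2 X w ▸ K.eqs_mem X w v

/-- Non-influencers are filled with arbitrary values of their ranges: the equation ignores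
them. -/
def solution (hK : K.Recursive) (t : K.Exo → K.World → K.Val) :
    (K.Exo ⊕ K.Endo) × K.World → K.Val :=
  hK.wellFounded.fix fun p rec =>
    match p.1 with
    | .inl U => t U p.2
    | .inr X => K.eqs X p.2 fun q =>
        if h : Relation.TransGen K.Influences q p then rec q h
        else (K.range_nonempty q.1 q.2).choose

theorem solution_inl (hK : K.Recursive) (U : K.Exo) (w : K.World) :
    K.solution hK t (.inl U, w) = t U w := by
  rw [solution, WellFounded.fix_eq]

theorem solution_inr (hK : K.Recursive) (X : K.Endo) (w : K.World) :
    K.solution hK t (.inr X, w) = K.eqs X w fun q =>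
      if Relation.TransGen K.Influences q (.inr X, w) then K.solution hK t q
      else (K.range_nonempty q.1 q.2).choose := by
  rw [solution, WellFounded.fix_eq]
  rfl

theorem solution_mem_range (hK : K.Recursive) (ht : K.ValidContext t) :
    ∀ r, K.solution hK t r ∈ K.range r.1 r.2
  | (.inl U, w) => solution_inl hK U w ▸ ht U w
  | (.inr X, w) => solution_inr hK X w ▸ K.eqs_mem X w _

theorem solution_solves (hK : K.Recursive) (ht : K.ValidContext t) :
    K.Solves t (K.solution hK t) := by
  refine ⟨solution_inl hK, fun X w => ?_⟩
  rw [solution_inr]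
  refine eqs_eq_of_eqOn_influences (fun r => ?_) (solution_mem_range hK ht)
    fun q hq => if_pos (.single hq)
  split_ifs
  · exact solution_mem_range hK ht r
  · exact (K.range_nonempty r.1 r.2).choose_spec

theorem Recursive.existsUnique_solves (hK : K.Recursive) (ht : K.ValidContext t) :
    ∃! v, K.Solves t v := by
  refine ⟨K.solution hK t, solution_solves hK ht, fun v hv => funext fun p => ?_⟩
  have hs := solution_solves hK ht
  induction p using hK.wellFounded.induction with
  | _ p ih =>
    rcases p with ⟨U | X, w⟩
    · rw [hv.1, hs.1]
    · rw [hv.2, hs.2]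
      exact eqs_eq_of_eqOn_influences (hv.mem_range ht) (hs.mem_range ht)
        fun q hq => ih q (.single hq)

end Solutions

section Interventions

variable {dom : Finset (K.Endo × K.World)} {val : K.Endo × K.World → K.Val}

theorem Influences.of_doInt {p q : (K.Exo ⊕ K.Endo) × K.World}
    (h : (K.doInt dom val).Influences p q) : K.Influences p q := by
  obtain ⟨X, w, rfl, g, g', hg, hg', hgg', hne⟩ := h
  refine ⟨X, w, rfl, g, g', hg, hg', hgg', fun heq => hne ?_⟩
  simp only [doInt]
  split_ifs
  · rfl
  · exact heq

theorem Recursive.doInt (hK : K.Recursive) : (K.doInt dom val).Recursive :=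
  fun p hp => hK p (Relation.TransGen.mono (fun _ _ => Influences.of_doInt) p p hp)

theorem doInt_eqs_congr {val' : K.Endo × K.World → K.Val} (h : ∀ p ∈ dom, val p = val' p)
    (X : K.Endo) (w : K.World) (g : (K.Exo ⊕ K.Endo) × K.World → K.Val) :
    (K.doInt dom val).eqs X w g = (K.doInt dom val').eqs X w g := by
  by_cases hp : (X, w) ∈ dom
  · simp only [doInt, h _ hp]
  · simp only [doInt, hp, false_and, if_false]

theorem solves_doInt_congr {val' : K.Endo × K.World → K.Val} (h : ∀ p ∈ dom, val p = val' p)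
    {v : (K.Exo ⊕ K.Endo) × K.World → K.Val} :
    (K.doInt dom val).Solves t v ↔ (K.doInt dom val').Solves t v :=
  and_congr_right fun _ => forall₂_congr fun X w => by rw [doInt_eqs_congr h X w v]; rfl

theorem satE_doInt {v : (K.Exo ⊕ K.Endo) × K.World → K.Val} {w : K.World}
    {α : Event K.Endo K.World K.Val} : (K.doInt dom val).SatE v w α ↔ K.SatE v w α := by
  induction α generalizing w with
  | eq | eqAt => rfl
  | neg α ih => exact not_congr ih
  | conj α β ihα ihβ => exact and_congr ihα ihβ
  | box α ih => exact forall_congr' fun _ => imp_congr_right fun _ => ih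

theorem satI_congr {val' : K.Endo × K.World → K.Val} (h : ∀ p ∈ dom, val p = val' p)
    {w : K.World} {α : Event K.Endo K.World K.Val} :
    K.SatI t dom val w α ↔ K.SatI t dom val' w α :=
  forall_congr' fun _ => imp_congr (solves_doInt_congr h) (satE_doInt.trans satE_doInt.symm)

theorem satI_iff_satE (hK : K.Recursive) (ht : K.ValidContext t)
    {u : (K.Exo ⊕ K.Endo) × K.World → K.Val} (hu : (K.doInt dom val).Solves t u)
    {w : K.World} {α : Event K.Endo K.World K.Val} :
    K.SatI t dom val w α ↔ K.SatE u w α := by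
  refine ⟨fun h => satE_doInt.1 (h u hu), fun h v hv => ?_⟩
  rw [(hK.doInt.existsUnique_solves ht).unique hv hu]
  exact satE_doInt.2 h

theorem satI_neg_iff (hK : K.Recursive) (ht : K.ValidContext t) {w : K.World}
    {α : Event K.Endo K.World K.Val} :
    K.SatI t dom val w (.neg α) ↔ ¬ K.SatI t dom val w α := by
  obtain ⟨u, hu, -⟩ := (hK.doInt (dom := dom) (val := val)).existsUnique_solves ht
  rw [satI_iff_satE hK ht hu, satI_iff_satE hK ht hu]
  rfl

end Interventions

section Causes

variable {w : K.World} {Y : Finset (K.Endo × K.World)} {y : K.Endo × K.World → K.Val}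
  {α : Event K.Endo K.World K.Val}

theorem AC1.mono (h : K.AC1 t w Y y α) {Y' : Finset (K.Endo × K.World)} (hY' : Y' ⊆ Y) :
    K.AC1 t w Y' y α :=
  fun v hv => ⟨(h v hv).1, fun p hp => (h v hv).2 p (hY' hp)⟩

theorem IsCauseM.satI_of_ssubset (hK : K.Recursive) (ht : K.ValidContext t)
    (hc : K.IsCauseM t w Y y α) {Y₁ D : Finset (K.Endo × K.World)} (hY₁ : Y₁ ⊂ Y)
    (hD : Y₁ ⊆ D) {y' : K.Endo × K.World → K.Val}
    (hy' : ∀ p ∈ Y₁, y' p ∈ K.range (Sum.inr p.1) p.2)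
    {v : (K.Exo ⊕ K.Endo) × K.World → K.Val} (hv : K.Solves t v) :
    K.SatI t D (fun p => if p ∈ Y₁ then y' p else v (Sum.inr p.1, p.2)) w α := by
  by_contra hα
  refine hc.2.2 Y₁ hY₁ y ⟨hc.1.mono hY₁.subset, D \ Y₁, y', hy', fun v' hv' => ?_⟩
  rw [(hK.existsUnique_solves ht).unique hv' hv, Finset.union_sdiff_of_subset hD]
  exact (satI_neg_iff hK ht).2 hα

theorem not_AC2u_empty (hK : K.Recursive) (ht : K.ValidContext t) :
    ¬ K.AC2u t w ∅ y α := by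
  rintro ⟨_, N, _, n, -, -, -, -, -, hneg, hpos⟩
  obtain ⟨v, hv, -⟩ := hK.existsUnique_solves ht
  have hα := hpos v hv ∅ (Finset.empty_subset _) N subset_rfl
  simp only [Finset.empty_union, Finset.union_empty, Finset.notMem_empty, if_false] at hneg hα
  exact (satI_neg_iff hK ht).1 hneg ((satI_congr fun p hp => if_pos hp).1 hα)

theorem IsCauseM.AC2u_singleton (hK : K.Recursive) (ht : K.ValidContext t)
    (hc : K.IsCauseM t w Y y α) {p : K.Endo × K.World} (hp : p ∈ Y) :
    K.AC2u t w {p} y α := by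
  have := K.endoFin; have := K.worldFin
  obtain ⟨N, y', hy', hneg⟩ := hc.2.1
  obtain ⟨v, hv, hv_unique⟩ := hK.existsUnique_solves ht
  set N₀ := (Y ∪ N).erase p
  set n₀ := fun q => if q ∈ Y then y' q else v (Sum.inr q.1, q.2)
  refine ⟨N₀ᶜ, N₀, y', n₀, by simp [N₀], disjoint_compl_left, ?_, ?_, ?_, ?_, ?_⟩
  · exact fun q => (em' (q ∈ N₀)).imp Finset.mem_compl.2 id
  · exact fun q hq => Finset.mem_singleton.1 hq ▸ hy' p hp
  · intro q _
    by_cases hq : q ∈ Y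
    · simpa [n₀, hq] using hy' q hq
    · simpa [n₀, hq] using hv.mem_range ht (Sum.inr q.1, q.2)
  · rw [Finset.singleton_union, Finset.insert_erase (Finset.mem_union_left N hp)]
    convert hneg v hv using 2 with q
    by_cases hq : q = p <;> simp [n₀, hq, hp]
  · intro v' hv' Z' _ N' hN'
    rw [hv_unique v' hv']
    have hpN' : p ∉ N' := fun h => Finset.notMem_erase p _ (hN' h)
    have hY₁ : N' ∩ Y ⊂ Y :=
      (Finset.ssubset_iff_of_subset Finset.inter_subset_right).2 ⟨p, hp, by simp [hpN']⟩
    have hD : N' ∩ Y ⊆ {p} ∪ N' ∪ Z' :=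
      Finset.inter_subset_left.trans (Finset.subset_union_right.trans Finset.subset_union_left)
    refine (satI_congr fun q _ => ?_).1
      (hc.satI_of_ssubset hK ht hY₁ hD (fun q hq => hy' q (Finset.mem_inter.1 hq).2) hv)
    rcases eq_or_ne q p with rfl | hq
    · simp [hpN', (hc.1 v hv).2 q hp]
    · by_cases hqN' : q ∈ N' <;> simp [n₀, hq, hqN']

theorem IsCauseM.isCauseU_singleton (hK : K.Recursive) (ht : K.ValidContext t)
    (hc : K.IsCauseM t w Y y α) {p : K.Endo × K.World} (hp : p ∈ Y) :
    K.IsCauseU t w {p} y α :=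
  ⟨hc.1.mono (Finset.singleton_subset_iff.2 hp), hc.AC2u_singleton hK ht hp,
    fun _ hY' _ h => not_AC2u_empty hK ht (Finset.ssubset_singleton_iff.1 hY' ▸ h.2)⟩

end Causes

end CKM

/-- If a primitive event `(X,w) = x` is part of a cause of an event `α`
in a recursive causal Kripke setting `(K,t)` at a world `w'` according to the MODIFIED HP
definition of actual causality, then `(X,w) = x` is part of a cause of `α` in `(K,t)` at
`w'` according to the UPDATED HP definition. -/
theorem partOfCause_modified_implies_updated (K : CKM) (hK : K.Recursive)
    (t : K.Exo → K.World → K.Val) (ht : K.ValidContext t)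
    (w' : K.World) (X : K.Endo) (w : K.World) (x : K.Val)
    (α : Event K.Endo K.World K.Val)
    (h : K.PartOfCauseM t w' X w x α) :
    K.PartOfCauseU t w' X w x α := by
  obtain ⟨Y, y, hc, hXY, hyx⟩ := h
  exact ⟨{(X, w)}, y, hc.isCauseU_singleton hK ht hXY, Finset.mem_singleton_self _, hyx⟩
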